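/- Degraded-channel sum-rate inequality. Let (U, X) have an arbitrary joint pmf P_{UX} on finite alphabets, let S ~ P_S be independent of (U, X), let Y be generated from (X, S) via a channel P_{Y|XS}, and let Z be generated from Y via a channel P_{Z|Y} (so U − (X, S) − Y − Z is a Markov chain and the broadcast channel is degraded). Then I(U; Z) + I(X; Y | U, S) ≤ I(X; Y | S). -/

import Mathlib

open scoped BigOperators
open Filter

noncomputable section

/-- A probability mass function on a finite alphabet. -/
def IsPMF {α : Type*} [Fintype α] (p : α → ℝ) : Prop :=
  (∀ a, 0 ≤ p a) ∧ ∑ a, p a = 1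

/-- A joint probability mass function on a pair of finite alphabets. -/
def IsPMF2 {α β : Type*} [Fintype α] [Fintype β] (p : α → β → ℝ) : Prop :=
  (∀ a b, 0 ≤ p a b) ∧ ∑ a, ∑ b, p a b = 1

/-- A transition kernel (channel) with a single input. -/
def IsChan1 {α γ : Type*} [Fintype γ] (W : α → γ → ℝ) : Prop :=
  ∀ a, (∀ c, 0 ≤ W a c) ∧ ∑ c, W a c = 1

/-- A transition kernel (channel) with two inputs. -/
def IsChan2 {α β γ : Type*} [Fintype γ] (W : α → β → γ → ℝ) : Prop :=
  ∀ a b, (∀ c, 0 ≤ W a b c) ∧ ∑ c, W a b c = 1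

/-- Mutual information `I(A;B)` (in bits, i.e. logarithm base 2) of a joint pmf `p`. -/
def MI {A B : Type*} [Fintype A] [Fintype B] (p : A → B → ℝ) : ℝ :=
  ∑ a, ∑ b,
    if p a b = 0 then 0
    else p a b * Real.logb 2 (p a b / ((∑ b', p a b') * (∑ a', p a' b)))

/-- Conditional mutual information `I(A;B|C)` (in bits) of a joint pmf `p c a b`. -/
def CMI {C A B : Type*} [Fintype C] [Fintype A] [Fintype B] (p : C → A → B → ℝ) : ℝ :=
  ∑ c, ∑ a, ∑ b,
    if p c a b = 0 then 0
    else p c a b * Real.logb 2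
      ((∑ a', ∑ b', p c a' b') * p c a b / ((∑ b', p c a b') * (∑ a', p c a' b)))

section Rates

variable {U 𝓧 𝓢 𝓨 𝓩 : Type*} [Fintype U] [Fintype 𝓧] [Fintype 𝓢] [Fintype 𝓨] [Fintype 𝓩]

/-- `I(U;Z)` under the joint law `(S,U,X,Y,Z) ~ P_{UX}·P_S·P_{YZ|XS}`. -/
def rateIUZ (pUX : U → 𝓧 → ℝ) (pS : 𝓢 → ℝ) (W : 𝓧 → 𝓢 → 𝓨 × 𝓩 → ℝ) : ℝ :=
  MI (fun (u : U) (z : 𝓩) => ∑ s, ∑ x, ∑ y, pUX u x * pS s * W x s (y, z))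

/-- `I(X;Y|U,S)` under the joint law `(S,U,X,Y,Z) ~ P_{UX}·P_S·P_{YZ|XS}`. -/
def rateIXY_US (pUX : U → 𝓧 → ℝ) (pS : 𝓢 → ℝ) (W : 𝓧 → 𝓢 → 𝓨 × 𝓩 → ℝ) : ℝ :=
  CMI (fun (us : U × 𝓢) (x : 𝓧) (y : 𝓨) => pUX us.1 x * pS us.2 * ∑ z, W x us.2 (y, z))

/-- `I(U;Y|S)` under the joint law `(S,U,X,Y,Z) ~ P_{UX}·P_S·P_{YZ|XS}`. -/
def rateIUY_S (pUX : U → 𝓧 → ℝ) (pS : 𝓢 → ℝ) (W : 𝓧 → 𝓢 → 𝓨 × 𝓩 → ℝ) : ℝ :=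
  CMI (fun (s : 𝓢) (u : U) (y : 𝓨) => ∑ x, pUX u x * pS s * ∑ z, W x s (y, z))

/-- `I(X;Y|S)` for an input pmf `pX`, state pmf `pS` and channel `W`. -/
def rateIXY_S (pX : 𝓧 → ℝ) (pS : 𝓢 → ℝ) (W : 𝓧 → 𝓢 → 𝓨 × 𝓩 → ℝ) : ℝ :=
  CMI (fun (s : 𝓢) (x : 𝓧) (y : 𝓨) => pX x * pS s * ∑ z, W x s (y, z))

/-- `I(X;Z)` for an input pmf `pX`, state pmf `pS` and channel `W`. -/
def rateIXZ (pX : 𝓧 → ℝ) (pS : 𝓢 → ℝ) (W : 𝓧 → 𝓢 → 𝓨 × 𝓩 → ℝ) : ℝ :=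
  MI (fun (x : 𝓧) (z : 𝓩) => ∑ s, ∑ y, pX x * pS s * W x s (y, z))

/-- Expected distortion `∑_{u,x} P_{UX}(u,x)·c*(u) = ∑_{u,z} min_{s'} ∑_s P(s,u,z)·d(s,s')`
of the optimal one-shot estimator `ŝ*(u,z) = argmin_{s'} ∑_s P_{S|UZ}(s|u,z)·d(s,s')`
based on `(U,Z)`. -/
def optDistUZ [Nonempty 𝓢] (pUX : U → 𝓧 → ℝ) (pS : 𝓢 → ℝ)
    (W : 𝓧 → 𝓢 → 𝓨 × 𝓩 → ℝ) (d : 𝓢 → 𝓢 → ℝ) : ℝ :=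
  ∑ u : U, ∑ z : 𝓩, Finset.univ.inf' Finset.univ_nonempty
    (fun s' : 𝓢 => ∑ s, (∑ x, ∑ y, pUX u x * pS s * W x s (y, z)) * d s s')

/-- Expected distortion `∑_x P_X(x)·E[d(S, ŝ*(X,Z)) | X = x]` of the optimal one-shot
estimator `ŝ*(x,z) = argmin_{s'} ∑_s P_{S|XZ}(s|x,z)·d(s,s')` based on `(X,Z)`. -/
def optDistXZ [Nonempty 𝓢] (pX : 𝓧 → ℝ) (pS : 𝓢 → ℝ)
    (W : 𝓧 → 𝓢 → 𝓨 × 𝓩 → ℝ) (d : 𝓢 → 𝓢 → ℝ) : ℝ :=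
  ∑ x : 𝓧, ∑ z : 𝓩, Finset.univ.inf' Finset.univ_nonempty
    (fun s' : 𝓢 => ∑ s, (pX x * pS s * ∑ y, W x s (y, z)) * d s s')

/-- Expected distortion `∑_x P_X(x)·c1(x)` of the optimal one-shot estimator
`ŝ*(z) = argmin_{s'} ∑_s P_{S|Z}(s|z)·d(s,s')` based on `Z` alone. -/
def optDistZ [Nonempty 𝓢] (pX : 𝓧 → ℝ) (pS : 𝓢 → ℝ)
    (W : 𝓧 → 𝓢 → 𝓨 × 𝓩 → ℝ) (d : 𝓢 → 𝓢 → ℝ) : ℝ :=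
  ∑ z : 𝓩, Finset.univ.inf' Finset.univ_nonempty
    (fun s' : 𝓢 => ∑ s, (∑ x, pX x * pS s * ∑ y, W x s (y, z)) * d s s')

end Rates

/-- The physically degraded broadcast channel `P_{YZ|XS}(y,z|x,s) = P_{Y|XS}(y|x,s)·P_{Z|Y}(z|y)`. -/
def degW {𝓧 𝓢 𝓨 𝓩 : Type*} (Wy : 𝓧 → 𝓢 → 𝓨 → ℝ) (Wq : 𝓨 → 𝓩 → ℝ) :
    𝓧 → 𝓢 → 𝓨 × 𝓩 → ℝ :=
  fun x s yz => Wy x s yz.1 * Wq yz.1 yz.2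

section Codes

variable {𝓧 𝓢 𝓨 𝓩 : Type*} [Fintype 𝓢] [Fintype 𝓨] [Fintype 𝓩]

/-- Probability of the i.i.d. state sequence `sv` and channel outputs `(yv, zv)`
given the input sequence `xv`. -/
def seqProb (pS : 𝓢 → ℝ) (W : 𝓧 → 𝓢 → 𝓨 × 𝓩 → ℝ) {n : ℕ}
    (xv : Fin n → 𝓧) (sv : Fin n → 𝓢) (yv : Fin n → 𝓨) (zv : Fin n → 𝓩) : ℝ :=
  ∏ i, pS (sv i) * W (xv i) (sv i) (yv i, zv i)

/-- A `(M0, M1, n)` code for the SDMBC-DMS model: an encoder, a decoder at the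
communication receiver (observing `(Y^n, S^n)`), a decoder at the sensing receiver
(observing `Z^n`) for the common message, and a state estimator at the sensing receiver. -/
structure SDMBCCode (𝓧 𝓢 𝓨 𝓩 : Type*) (n M0 M1 : ℕ) where
  enc : Fin M0 → Fin M1 → Fin n → 𝓧
  dec1 : (Fin n → 𝓨) → (Fin n → 𝓢) → Fin M0 × Fin M1
  dec2 : (Fin n → 𝓩) → Fin M0
  est : (Fin n → 𝓩) → Fin n → 𝓢

/-- Average error probability `P_e^{(n)} = Pr{(Ŵ01,Ŵ1) ≠ (W0,W1) or Ŵ02 ≠ W0}` under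
uniform messages. -/
def errProbSDMBC (pS : 𝓢 → ℝ) (W : 𝓧 → 𝓢 → 𝓨 × 𝓩 → ℝ) {n M0 M1 : ℕ}
    (c : SDMBCCode 𝓧 𝓢 𝓨 𝓩 n M0 M1) : ℝ :=
  (1 / ((M0 : ℝ) * (M1 : ℝ))) * ∑ w0 : Fin M0, ∑ w1 : Fin M1, ∑ sv : Fin n → 𝓢,
    ∑ yv : Fin n → 𝓨, ∑ zv : Fin n → 𝓩,
      if c.dec1 yv sv ≠ (w0, w1) ∨ c.dec2 zv ≠ w0
      then seqProb pS W (c.enc w0 w1) sv yv zv else 0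

/-- Expected average per-block distortion `D^{(n)} = (1/n) ∑_i E[d(S_i, Ŝ_i)]`. -/
def avgDistSDMBC (pS : 𝓢 → ℝ) (W : 𝓧 → 𝓢 → 𝓨 × 𝓩 → ℝ) (d : 𝓢 → 𝓢 → ℝ)
    {n M0 M1 : ℕ} (c : SDMBCCode 𝓧 𝓢 𝓨 𝓩 n M0 M1) : ℝ :=
  (1 / ((M0 : ℝ) * (M1 : ℝ))) * ∑ w0 : Fin M0, ∑ w1 : Fin M1, ∑ sv : Fin n → 𝓢,
    ∑ yv : Fin n → 𝓨, ∑ zv : Fin n → 𝓩,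
      seqProb pS W (c.enc w0 w1) sv yv zv *
        ((1 / (n : ℝ)) * ∑ i, d (sv i) (c.est zv i))

/-- Achievability of a rate-distortion tuple `(R0, R1, D)` for the SDMBC-DMS model:
there is a sequence of `(2^{nR0}, 2^{nR1}, n)` codes with vanishing error probability
and asymptotic distortion at most `D`. -/
def AchievableSDMBC (pS : 𝓢 → ℝ) (W : 𝓧 → 𝓢 → 𝓨 × 𝓩 → ℝ) (d : 𝓢 → 𝓢 → ℝ)
    (R0 R1 D : ℝ) : Prop :=
  ∃ (M0 M1 : ℕ → ℕ) (c : ∀ n, SDMBCCode 𝓧 𝓢 𝓨 𝓩 n (M0 n) (M1 n)),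
    (∀ n : ℕ, (2 : ℝ) ^ ((n : ℝ) * R0) ≤ (M0 n : ℝ)) ∧
    (∀ n : ℕ, (2 : ℝ) ^ ((n : ℝ) * R1) ≤ (M1 n : ℝ)) ∧
    Tendsto (fun n => errProbSDMBC pS W (c n)) atTop (nhds 0) ∧
    Filter.limsup (fun n => avgDistSDMBC pS W d (c n)) atTop ≤ D

/-- A `(M, n)` code for the point-to-point setting (blind estimation): the sensing
receiver decodes nothing and estimates the state from `Z^n` alone. -/
structure P2PCode (𝓧 𝓢 𝓨 𝓩 : Type*) (n M : ℕ) where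
  enc : Fin M → Fin n → 𝓧
  dec : (Fin n → 𝓨) → (Fin n → 𝓢) → Fin M
  est : (Fin n → 𝓩) → Fin n → 𝓢

def errProbP2P (pS : 𝓢 → ℝ) (W : 𝓧 → 𝓢 → 𝓨 × 𝓩 → ℝ) {n M : ℕ}
    (c : P2PCode 𝓧 𝓢 𝓨 𝓩 n M) : ℝ :=
  (1 / (M : ℝ)) * ∑ w : Fin M, ∑ sv : Fin n → 𝓢, ∑ yv : Fin n → 𝓨, ∑ zv : Fin n → 𝓩,
    if c.dec yv sv ≠ w then seqProb pS W (c.enc w) sv yv zv else 0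

def avgDistP2P (pS : 𝓢 → ℝ) (W : 𝓧 → 𝓢 → 𝓨 × 𝓩 → ℝ) (d : 𝓢 → 𝓢 → ℝ)
    {n M : ℕ} (c : P2PCode 𝓧 𝓢 𝓨 𝓩 n M) : ℝ :=
  (1 / (M : ℝ)) * ∑ w : Fin M, ∑ sv : Fin n → 𝓢, ∑ yv : Fin n → 𝓨, ∑ zv : Fin n → 𝓩,
    seqProb pS W (c.enc w) sv yv zv * ((1 / (n : ℝ)) * ∑ i, d (sv i) (c.est zv i))

/-- Achievability of a rate-distortion pair `(R, D)` with blind estimation. -/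
def AchievableP2P (pS : 𝓢 → ℝ) (W : 𝓧 → 𝓢 → 𝓨 × 𝓩 → ℝ) (d : 𝓢 → 𝓢 → ℝ)
    (R D : ℝ) : Prop :=
  ∃ (M : ℕ → ℕ) (c : ∀ n, P2PCode 𝓧 𝓢 𝓨 𝓩 n (M n)),
    (∀ n : ℕ, (2 : ℝ) ^ ((n : ℝ) * R) ≤ (M n : ℝ)) ∧
    Tendsto (fun n => errProbP2P pS W (c n)) atTop (nhds 0) ∧
    Filter.limsup (fun n => avgDistP2P pS W d (c n)) atTop ≤ D

/-- A `(M, n)` code for the full-decoding setting: both receivers must decode the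
whole message; the sensing receiver estimates the state from `Z^n` (and hence may use
its decoded message, which is a function of `Z^n`). -/
structure FDCode (𝓧 𝓢 𝓨 𝓩 : Type*) (n M : ℕ) where
  enc : Fin M → Fin n → 𝓧
  dec1 : (Fin n → 𝓨) → (Fin n → 𝓢) → Fin M
  dec2 : (Fin n → 𝓩) → Fin M
  est : (Fin n → 𝓩) → Fin n → 𝓢

def errProbFD (pS : 𝓢 → ℝ) (W : 𝓧 → 𝓢 → 𝓨 × 𝓩 → ℝ) {n M : ℕ}
    (c : FDCode 𝓧 𝓢 𝓨 𝓩 n M) : ℝ :=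
  (1 / (M : ℝ)) * ∑ w : Fin M, ∑ sv : Fin n → 𝓢, ∑ yv : Fin n → 𝓨, ∑ zv : Fin n → 𝓩,
    if c.dec1 yv sv ≠ w ∨ c.dec2 zv ≠ w
    then seqProb pS W (c.enc w) sv yv zv else 0

def avgDistFD (pS : 𝓢 → ℝ) (W : 𝓧 → 𝓢 → 𝓨 × 𝓩 → ℝ) (d : 𝓢 → 𝓢 → ℝ)
    {n M : ℕ} (c : FDCode 𝓧 𝓢 𝓨 𝓩 n M) : ℝ :=
  (1 / (M : ℝ)) * ∑ w : Fin M, ∑ sv : Fin n → 𝓢, ∑ yv : Fin n → 𝓨, ∑ zv : Fin n → 𝓩,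
    seqProb pS W (c.enc w) sv yv zv * ((1 / (n : ℝ)) * ∑ i, d (sv i) (c.est zv i))

/-- Achievability of a rate-distortion pair `(R, D)` with full-decoding-based estimation. -/
def AchievableFD (pS : 𝓢 → ℝ) (W : 𝓧 → 𝓢 → 𝓨 × 𝓩 → ℝ) (d : 𝓢 → 𝓢 → ℝ)
    (R D : ℝ) : Prop :=
  ∃ (M : ℕ → ℕ) (c : ∀ n, FDCode 𝓧 𝓢 𝓨 𝓩 n (M n)),
    (∀ n : ℕ, (2 : ℝ) ^ ((n : ℝ) * R) ≤ (M n : ℝ)) ∧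
    Tendsto (fun n => errProbFD pS W (c n)) atTop (nhds 0) ∧
    Filter.limsup (fun n => avgDistFD pS W d (c n)) atTop ≤ D

end Codes

/-- The binary alphabet `{0,1}` (with mod-2 arithmetic). -/
abbrev Bin : Type := ZMod 2

/-- `Bernoulli(q)` state pmf: `P(S = 1) = q`. -/
def bern (q : ℝ) : Bin → ℝ := fun s => if s = 1 then q else 1 - q

/-- Input pmf with `P(X = 0) = p`. -/
def pmfX (p : ℝ) : Bin → ℝ := fun x => if x = 0 then p else 1 - p

/-- Hamming distortion `d(s, ŝ) = s ⊕ ŝ`. -/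
def hamming : Bin → Bin → ℝ := fun s t => if s = t then 0 else 1

/-- The binary entropy function `H2(t) = −t·log2 t − (1−t)·log2 (1−t)`. -/
def H2 (t : ℝ) : ℝ := -(t * Real.logb 2 t) - (1 - t) * Real.logb 2 (1 - t)

/-- The channel of Example 1: `Y = S·X` and `Z = a·S·X + ((X + N) mod 2)` with
`N ~ Bernoulli(e)`.  Since `a ∈ (0,1)`, the value `Z` is faithfully encoded by the pair
`(S·X, (X + N) mod 2) ∈ Bin × Bin` (the real values `0, 1, a, a+1` correspond to the
pairs `(0,0), (0,1), (1,0), (1,1)` respectively). -/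
def ex1W (e : ℝ) : Bin → Bin → Bin × (Bin × Bin) → ℝ := fun x s yz =>
  (if yz.1 = s * x then 1 else 0) * (if yz.2.1 = s * x then 1 else 0) *
    (if yz.2.2 = x then 1 - e else e)

/-- The channel of Example 2 (degraded): `Y = S·X` and
`Z = a·Y + ((Y + N) mod 2)` with `N ~ Bernoulli(e)`, encoded by the pair
`(S·X, (S·X + N) mod 2) ∈ Bin × Bin`. -/
def ex2W (e : ℝ) : Bin → Bin → Bin × (Bin × Bin) → ℝ := fun x s yz =>
  (if yz.1 = s * x then 1 else 0) * (if yz.2.1 = s * x then 1 else 0) *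
    (if yz.2.2 = s * x then 1 - e else e)


/-!
Under the joint law `P(u,s,x,y,z) = P_{UX}(u,x) P_S(s) P_{Y|XS}(y|x,s) P_{Z|Y}(z|y)` every
(conditional) mutual information is the expectation of a log-ratio of marginals of `P`.
Independence of `U` and `S`, `P(y|u,s,x) = P_{Y|XS}(y|x,s)` and `P(z|u,s,y) = P_{Z|Y}(z|y)`
make these information densities satisfy, pointwise on the support of `P`,
`i(X;Y|S) = i(U;Z) + i(X;Y|U,S) + i(U;S,Y|Z)`.
Taking expectations gives `I(X;Y|S) = I(U;Z) + I(X;Y|U,S) + I(U;S,Y|Z)`, and the last term is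
nonnegative by Gibbs' inequality.
-/

open Finset

/-- The summand of `MI` and `CMI`. -/
def mulLogb (p r : ℝ) : ℝ := if p = 0 then 0 else p * Real.logb 2 r

@[simp] lemma mulLogb_zero_left (r : ℝ) : mulLogb 0 r = 0 := if_pos rfl

lemma mulLogb_sum {ι : Type*} {s : Finset ι} {q : ι → ℝ} (hq : ∀ i ∈ s, 0 ≤ q i) (r : ℝ) :
    mulLogb (∑ i ∈ s, q i) r = ∑ i ∈ s, mulLogb (q i) r := by
  by_cases h : ∑ i ∈ s, q i = 0
  · rw [h, mulLogb_zero_left]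
    refine (sum_eq_zero fun i hi => ?_).symm
    rw [(sum_eq_zero_iff_of_nonneg hq).1 h i hi, mulLogb_zero_left]
  · rw [mulLogb, if_neg h, sum_mul]
    refine sum_congr rfl fun i _ => ?_
    by_cases hi : q i = 0 <;> simp [mulLogb, hi]

lemma mulLogb_mul {p r₁ r₂ : ℝ} (h : p ≠ 0 → r₁ ≠ 0 ∧ r₂ ≠ 0) :
    mulLogb p (r₁ * r₂) = mulLogb p r₁ + mulLogb p r₂ := by
  by_cases hp : p = 0
  · simp [hp]
  obtain ⟨h₁, h₂⟩ := h hp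
  simp only [mulLogb, if_neg hp, Real.logb_mul h₁ h₂, mul_add]

lemma sub_div_log_two_le_mulLogb_div {f g : ℝ} (hf : 0 ≤ f) (hg : 0 ≤ g) (hfg : g = 0 → f = 0) :
    (f - g) / Real.log 2 ≤ mulLogb f (f / g) := by
  have hlog2 : 0 < Real.log 2 := Real.log_pos one_lt_two
  rcases hf.eq_or_lt with rfl | hf
  · rw [zero_sub, neg_div, mulLogb_zero_left, neg_nonpos]
    exact div_nonneg hg hlog2.le
  have hg : 0 < g := hg.lt_of_ne fun h => hf.ne' (hfg h.symm)
  have key : f - g ≤ f * Real.log (f / g) := by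
    have := mul_le_mul_of_nonneg_left (Real.one_sub_inv_le_log_of_pos (div_pos hf hg)) hf.le
    rwa [inv_div, mul_sub, mul_one, mul_div_cancel₀ _ hf.ne'] at this
  rw [mulLogb, if_neg hf.ne', Real.logb, ← mul_div_assoc]
  exact div_le_div_of_nonneg_right key hlog2.le

lemma sum_mulLogb_cmi_nonneg {A B : Type*} [Fintype A] [Fintype B] (f : A → B → ℝ)
    (hf : ∀ a b, 0 ≤ f a b) :
    0 ≤ ∑ a, ∑ b, mulLogb (f a b)
      ((∑ a', ∑ b', f a' b') * f a b / ((∑ b', f a b') * (∑ a', f a' b))) := by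
  set T := ∑ a', ∑ b', f a' b'
  set row := fun a => ∑ b', f a b'
  set col := fun b => ∑ a', f a' b
  have hrow : ∀ a b, f a b ≤ row a := fun a b => single_le_sum (fun b _ => hf a b) (mem_univ b)
  have hcol : ∀ a b, f a b ≤ col b := fun a b => single_le_sum (fun a _ => hf a b) (mem_univ a)
  have hT : ∀ a, row a ≤ T := fun a =>
    single_le_sum (f := row) (fun a _ => sum_nonneg fun b _ => hf a b) (mem_univ a)
  have hsum_row : ∑ a, row a = T := rfl
  have hsum_col : ∑ b, col b = T := sum_comm
  -- Each term is at least `(f - row·col/T) / log 2`, and these bounds sum to `T - T·T/T = 0`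
  -- (also for `T = 0`, since `0 / 0 = 0`).
  have hterm : ∀ a b, (f a b - row a * col b / T) / Real.log 2 ≤
      mulLogb (f a b) (T * f a b / (row a * col b)) := by
    intro a b
    rw [mul_comm T, ← div_div_eq_mul_div (f a b)]
    refine sub_div_log_two_le_mulLogb_div (hf a b)
      (div_nonneg (mul_nonneg ((hf a b).trans (hrow a b)) ((hf a b).trans (hcol a b)))
        ((hf a b).trans ((hrow a b).trans (hT a)))) fun h => ?_
    rcases div_eq_zero_iff.1 h with h | h
    · rcases mul_eq_zero.1 h with h | h
      · exact le_antisymm (h ▸ hrow a b) (hf a b)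
      · exact le_antisymm (h ▸ hcol a b) (hf a b)
    · exact le_antisymm (h ▸ (hrow a b).trans (hT a)) (hf a b)
  have hzero : ∑ a, ∑ b, (f a b - row a * col b / T) / Real.log 2 = 0 := by
    simp only [← sum_div, sum_sub_distrib, ← mul_sum, ← sum_mul, hsum_col, hsum_row]
    rw [mul_self_div_self, sub_self, zero_div]
  exact hzero.ge.trans (sum_le_sum fun a _ => sum_le_sum fun b _ => hterm a b)

lemma CMI_nonneg {C A B : Type*} [Fintype C] [Fintype A] [Fintype B] (p : C → A → B → ℝ)
    (hp : ∀ c a b, 0 ≤ p c a b) : 0 ≤ CMI p :=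
  sum_nonneg fun c _ => sum_mulLogb_cmi_nonneg (p c) (hp c)

section Marginal

variable {Ω α β : Type*} [Fintype Ω] [DecidableEq α] [DecidableEq β] {P : Ω → ℝ}

def marginal (P : Ω → ℝ) (g : Ω → α) (a : α) : ℝ := ∑ ω with g ω = a, P ω

lemma marginal_nonneg (hP : ∀ ω, 0 ≤ P ω) (g : Ω → α) (a : α) : 0 ≤ marginal P g a :=
  sum_nonneg fun ω _ => hP ω

lemma marginal_pos (hP : ∀ ω, 0 ≤ P ω) {ω : Ω} (hω : 0 < P ω) (g : Ω → α) :
    0 < marginal P g (g ω) :=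
  hω.trans_le (single_le_sum (fun ω _ => hP ω) (mem_filter.2 ⟨mem_univ ω, rfl⟩))

lemma marginal_congr {g : Ω → α} {g' : Ω → β} {a : α} {b : β} (h : ∀ ω, g ω = a ↔ g' ω = b) :
    marginal P g a = marginal P g' b := by
  simp only [marginal, h]

lemma marginal_swap (g : Ω → α) (h : Ω → β) (a : α) (b : β) :
    marginal P (fun ω => (g ω, h ω)) (a, b) = marginal P (fun ω => (h ω, g ω)) (b, a) :=
  marginal_congr fun ω => by simp only [Prod.mk.injEq, and_comm]

lemma sum_marginal_pair [Fintype β] (g : Ω → α) (h : Ω → β) (a : α) :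
    ∑ b, marginal P (fun ω => (g ω, h ω)) (a, b) = marginal P g a := by
  rw [marginal, ← sum_fiberwise _ h P]
  refine sum_congr rfl fun b _ => ?_
  rw [marginal, filter_filter]
  simp only [Prod.mk.injEq]

lemma sum_mulLogb_marginal [Fintype α] (hP : ∀ ω, 0 ≤ P ω) (g : Ω → α) (r : α → ℝ) :
    ∑ a, mulLogb (marginal P g a) (r a) = ∑ ω, mulLogb (P ω) (r (g ω)) := by
  simp_rw [marginal, mulLogb_sum fun ω _ => hP ω]
  rw [← sum_fiberwise univ g fun ω => mulLogb (P ω) (r (g ω))]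
  exact sum_congr rfl fun a _ => sum_congr rfl fun ω hω => by rw [(mem_filter.1 hω).2]

end Marginal

section InformationOfMarginals

variable {Ω A B C : Type*} [Fintype Ω] [Fintype A] [Fintype B] [Fintype C]
  [DecidableEq A] [DecidableEq B] [DecidableEq C] {P : Ω → ℝ}

lemma MI_eq_sum_of_marginal (hP : ∀ ω, 0 ≤ P ω) (fA : Ω → A) (fB : Ω → B) {p : A → B → ℝ}
    (hp : ∀ a b, p a b = marginal P (fun ω => (fA ω, fB ω)) (a, b)) :
    MI p = ∑ ω, mulLogb (P ω) (marginal P (fun ω => (fA ω, fB ω)) (fA ω, fB ω) /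
      (marginal P fA (fA ω) * marginal P fB (fB ω))) := by
  have hrow : ∀ a, ∑ b, p a b = marginal P fA a := fun a => by
    simp only [hp, sum_marginal_pair]
  have hcol : ∀ b, ∑ a, p a b = marginal P fB b := fun b => by
    rw [← sum_marginal_pair fB fA b]
    exact sum_congr rfl fun a _ => (hp a b).trans (marginal_swap fA fB a b)
  show ∑ a, ∑ b, mulLogb (p a b) (p a b / ((∑ b', p a b') * ∑ a', p a' b)) = _
  simp only [hrow, hcol]
  have := sum_mulLogb_marginal hP (fun ω => (fA ω, fB ω)) fun ab =>
    marginal P (fun ω => (fA ω, fB ω)) ab / (marginal P fA ab.1 * marginal P fB ab.2)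
  simp only [Fintype.sum_prod_type] at this
  simpa only [hp] using this

lemma CMI_eq_sum_of_marginal (hP : ∀ ω, 0 ≤ P ω) (fC : Ω → C) (fA : Ω → A) (fB : Ω → B)
    {p : C → A → B → ℝ}
    (hp : ∀ c a b, p c a b = marginal P (fun ω => (fC ω, fA ω, fB ω)) (c, a, b)) :
    CMI p = ∑ ω, mulLogb (P ω)
      (marginal P fC (fC ω) * marginal P (fun ω => (fC ω, fA ω, fB ω)) (fC ω, fA ω, fB ω) /
        (marginal P (fun ω => (fC ω, fA ω)) (fC ω, fA ω) *
          marginal P (fun ω => (fC ω, fB ω)) (fC ω, fB ω))) := by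
  have htot : ∀ c, ∑ a, ∑ b, p c a b = marginal P fC c := fun c => by
    simp only [hp, ← Fintype.sum_prod_type']
    exact sum_marginal_pair fC (fun ω => (fA ω, fB ω)) c
  have hrow : ∀ c a, ∑ b, p c a b = marginal P (fun ω => (fC ω, fA ω)) (c, a) := fun c a => by
    rw [← sum_marginal_pair (fun ω => (fC ω, fA ω)) fB (c, a)]
    exact sum_congr rfl fun b _ => (hp c a b).trans (marginal_congr fun ω => by
      simp only [Prod.mk.injEq, and_assoc])
  have hcol : ∀ c b, ∑ a, p c a b = marginal P (fun ω => (fC ω, fB ω)) (c, b) := fun c b => by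
    rw [← sum_marginal_pair (fun ω => (fC ω, fB ω)) fA (c, b)]
    exact sum_congr rfl fun a _ => (hp c a b).trans (marginal_congr fun ω => by
      simp only [Prod.mk.injEq]; tauto)
  show ∑ c, ∑ a, ∑ b, mulLogb (p c a b)
    ((∑ a', ∑ b', p c a' b') * p c a b / ((∑ b', p c a b') * ∑ a', p c a' b)) = _
  simp only [htot]
  simp only [hrow, hcol]
  have := sum_mulLogb_marginal hP (fun ω => (fC ω, fA ω, fB ω)) fun cab =>
    marginal P fC cab.1 * marginal P (fun ω => (fC ω, fA ω, fB ω)) cab /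
      (marginal P (fun ω => (fC ω, fA ω)) (cab.1, cab.2.1) *
        marginal P (fun ω => (fC ω, fB ω)) (cab.1, cab.2.2))
  simp only [Fintype.sum_prod_type] at this
  simpa only [hp] using this

end InformationOfMarginals

/-- With `mU = P(u)`, `mS = P(s)`, `mZ = P(z)`, `mUZ = P(u,z)`, `mUSX = P(u,s,x)`,
`mUSY = P(u,s,y)`, `mSX = P(s,x)`, `mSY = P(s,y)`, `c = P_{Y|XS}(y|x,s)` and `d = P_{Z|Y}(z|y)`,
this is the identity `i(X;Y|S) = i(U;Z) + i(X;Y|U,S) + i(U;S,Y|Z)` of information densities. -/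
lemma mulLogb_density_chain (p : ℝ) {mU mS mZ mUZ mUSX mUSY mSX mSY c d : ℝ} (hmU : mU ≠ 0)
    (hmS : mS ≠ 0) (hmZ : mZ ≠ 0) (hmUZ : mUZ ≠ 0) (hmUSX : mUSX ≠ 0) (hmUSY : mUSY ≠ 0)
    (hmSX : mSX ≠ 0) (hmSY : mSY ≠ 0) (hc : c ≠ 0) (hd : d ≠ 0) :
    mulLogb p (mS * (mSX * c) / (mSX * mSY)) =
      mulLogb p (mUZ / (mU * mZ)) + mulLogb p (mU * mS * (mUSX * c) / (mUSX * mUSY)) +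
        mulLogb p (mZ * (mUSY * d) / (mUZ * (mSY * d))) := by
  rw [← mulLogb_mul fun _ => ⟨by positivity, by positivity⟩,
    ← mulLogb_mul fun _ => ⟨by positivity, by positivity⟩]
  congr 1
  field_simp

section Degraded

variable {U 𝓧 𝓢 𝓨 𝓩 : Type*} [Fintype U] [Fintype 𝓧] [Fintype 𝓢] [Fintype 𝓨] [Fintype 𝓩]
  {pUX : U → 𝓧 → ℝ} {pS : 𝓢 → ℝ} {Wy : 𝓧 → 𝓢 → 𝓨 → ℝ} {Wq : 𝓨 → 𝓩 → ℝ}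

variable (pUX pS Wy Wq) in
/-- The joint pmf of `(U, S, X, (Y, Z))`. -/
def degJoint (ω : U × 𝓢 × 𝓧 × 𝓨 × 𝓩) : ℝ :=
  pUX ω.1 ω.2.2.1 * pS ω.2.1 * degW Wy Wq ω.2.2.1 ω.2.1 ω.2.2.2

local notation "𝐏" => degJoint pUX pS Wy Wq

lemma degJoint_nonneg (hpUX : IsPMF2 pUX) (hpS : IsPMF pS) (hWy : IsChan2 Wy)
    (hWq : IsChan1 Wq) (ω : U × 𝓢 × 𝓧 × 𝓨 × 𝓩) : 0 ≤ 𝐏 ω :=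
  mul_nonneg (mul_nonneg (hpUX.1 _ _) (hpS.1 _)) (mul_nonneg ((hWy _ _).1 _) ((hWq _).1 _))

open scoped Classical

lemma marginal_degJoint_UZ (u : U) (z : 𝓩) :
    marginal 𝐏 (fun ω => (ω.1, ω.2.2.2.2)) (u, z) =
      ∑ s, ∑ x, ∑ y, pUX u x * pS s * degW Wy Wq x s (y, z) := by
  simp only [marginal, sum_filter, Fintype.sum_prod_type]
  -- The `Decidable` instances of the conditions still mention the other summation variables;
  -- rewriting with `eq_comm` replaces them, so that `sum_ite_irrel` and `sum_ite_eq` apply.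
  simp only [eq_comm, Prod.mk.injEq, ite_and, sum_ite_irrel, sum_const_zero, sum_ite_eq, mem_univ,
    if_true, degJoint]

lemma marginal_degJoint_USXY (u : U) (s : 𝓢) (x : 𝓧) (y : 𝓨) :
    marginal 𝐏 (fun ω => ((ω.1, ω.2.1), ω.2.2.1, ω.2.2.2.1)) ((u, s), x, y) =
      pUX u x * pS s * ∑ z, degW Wy Wq x s (y, z) := by
  simp only [marginal, sum_filter, Fintype.sum_prod_type]
  simp only [eq_comm, Prod.mk.injEq, ite_and, sum_ite_irrel, sum_const_zero, sum_ite_eq, mem_univ,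
    if_true, degJoint, mul_sum]

lemma marginal_degJoint_SXY (s : 𝓢) (x : 𝓧) (y : 𝓨) :
    marginal 𝐏 (fun ω => (ω.2.1, ω.2.2.1, ω.2.2.2.1)) (s, x, y) =
      (∑ u, pUX u x) * pS s * ∑ z, degW Wy Wq x s (y, z) := by
  simp only [marginal, sum_filter, Fintype.sum_prod_type]
  simp only [eq_comm, Prod.mk.injEq, ite_and, sum_ite_irrel, sum_const_zero, sum_ite_eq, mem_univ,
    if_true, degJoint, mul_sum, sum_mul]
  exact sum_comm

lemma marginal_degJoint_US_eq_mul (hpUX : IsPMF2 pUX) (hpS : IsPMF pS) (hWy : IsChan2 Wy)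
    (hWq : IsChan1 Wq) (u : U) (s : 𝓢) :
    marginal 𝐏 (fun ω => (ω.1, ω.2.1)) (u, s) =
      marginal 𝐏 (fun ω => ω.1) u * marginal 𝐏 (fun ω => ω.2.1) s := by
  simp only [marginal, sum_filter, Fintype.sum_prod_type]
  simp only [eq_comm, Prod.mk.injEq, ite_and, sum_ite_irrel, sum_const_zero, sum_ite_eq, mem_univ,
    if_true, degJoint, degW]
  simp only [← mul_sum, ← sum_mul, mul_assoc, (hWq _).2, (hWy _ _).2, hpS.2, hpUX.2, mul_one,
    one_mul]

lemma marginal_degJoint_USXY_eq_mul (hWq : IsChan1 Wq) (hWy : IsChan2 Wy) (u : U) (s : 𝓢)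
    (x : 𝓧) (y : 𝓨) :
    marginal 𝐏 (fun ω => ((ω.1, ω.2.1), ω.2.2.1, ω.2.2.2.1)) ((u, s), x, y) =
      marginal 𝐏 (fun ω => ((ω.1, ω.2.1), ω.2.2.1)) ((u, s), x) * Wy x s y := by
  simp only [marginal, sum_filter, Fintype.sum_prod_type]
  simp only [eq_comm, Prod.mk.injEq, ite_and, sum_ite_irrel, sum_const_zero, sum_ite_eq, mem_univ,
    if_true, degJoint, degW]
  simp only [← mul_sum, mul_assoc, (hWq _).2, (hWy _ _).2, mul_one]

lemma marginal_degJoint_SXY_eq_mul (hWq : IsChan1 Wq) (hWy : IsChan2 Wy) (s : 𝓢) (x : 𝓧)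
    (y : 𝓨) :
    marginal 𝐏 (fun ω => (ω.2.1, ω.2.2.1, ω.2.2.2.1)) (s, x, y) =
      marginal 𝐏 (fun ω => (ω.2.1, ω.2.2.1)) (s, x) * Wy x s y := by
  simp only [marginal, sum_filter, Fintype.sum_prod_type]
  simp only [eq_comm, Prod.mk.injEq, ite_and, sum_ite_irrel, sum_const_zero, sum_ite_eq, mem_univ,
    if_true, degJoint, degW]
  simp only [← mul_sum, ← sum_mul, mul_assoc, (hWq _).2, (hWy _ _).2, mul_one]

lemma marginal_degJoint_ZUSY_eq_mul (hWq : IsChan1 Wq) (z : 𝓩) (u : U) (s : 𝓢) (y : 𝓨) :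
    marginal 𝐏 (fun ω => (ω.2.2.2.2, ω.1, ω.2.1, ω.2.2.2.1)) (z, u, s, y) =
      marginal 𝐏 (fun ω => ((ω.1, ω.2.1), ω.2.2.2.1)) ((u, s), y) * Wq y z := by
  simp only [marginal, sum_filter, Fintype.sum_prod_type]
  simp only [eq_comm, Prod.mk.injEq, ite_and, sum_ite_irrel, sum_const_zero, sum_ite_eq, mem_univ,
    if_true, degJoint, degW]
  simp only [← mul_sum, (hWq _).2, mul_one]
  simp only [sum_mul, mul_assoc]

lemma marginal_degJoint_ZSY_eq_mul (hWq : IsChan1 Wq) (z : 𝓩) (s : 𝓢) (y : 𝓨) :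
    marginal 𝐏 (fun ω => (ω.2.2.2.2, ω.2.1, ω.2.2.2.1)) (z, s, y) =
      marginal 𝐏 (fun ω => (ω.2.1, ω.2.2.2.1)) (s, y) * Wq y z := by
  simp only [marginal, sum_filter, Fintype.sum_prod_type]
  simp only [eq_comm, Prod.mk.injEq, ite_and, sum_ite_irrel, sum_const_zero, sum_ite_eq, mem_univ,
    if_true, degJoint, degW]
  simp only [← mul_sum, (hWq _).2, mul_one]
  simp only [sum_mul, mul_assoc]

/-- The last term is `I(U; S, Y | Z)`. -/
lemma degraded_chain_rule (hpUX : IsPMF2 pUX) (hpS : IsPMF pS) (hWy : IsChan2 Wy)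
    (hWq : IsChan1 Wq) :
    rateIXY_S (fun x => ∑ u, pUX u x) pS (degW Wy Wq) =
      rateIUZ pUX pS (degW Wy Wq) + rateIXY_US pUX pS (degW Wy Wq) +
        CMI (fun z u (sy : 𝓢 × 𝓨) =>
          marginal 𝐏 (fun ω => (ω.2.2.2.2, ω.1, ω.2.1, ω.2.2.2.1)) (z, u, sy)) := by
  have hP := degJoint_nonneg hpUX hpS hWy hWq
  rw [rateIXY_S, CMI_eq_sum_of_marginal hP (fun ω => ω.2.1) (fun ω => ω.2.2.1)
      (fun ω => ω.2.2.2.1) fun s x y => (marginal_degJoint_SXY s x y).symm,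
    rateIUZ, MI_eq_sum_of_marginal hP (fun ω => ω.1) (fun ω => ω.2.2.2.2)
      fun u z => (marginal_degJoint_UZ u z).symm,
    rateIXY_US, CMI_eq_sum_of_marginal hP (fun ω => (ω.1, ω.2.1)) (fun ω => ω.2.2.1)
      (fun ω => ω.2.2.2.1) fun us x y => (marginal_degJoint_USXY us.1 us.2 x y).symm,
    CMI_eq_sum_of_marginal hP (fun ω => ω.2.2.2.2) (fun ω => ω.1)
      (fun ω => (ω.2.1, ω.2.2.2.1)) fun _ _ _ => rfl,
    ← sum_add_distrib, ← sum_add_distrib]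
  refine sum_congr rfl fun ω _ => ?_
  by_cases h0 : 𝐏 ω = 0
  · simp [h0]
  have hω : 0 < 𝐏 ω := (hP ω).lt_of_ne' h0
  obtain ⟨u, s, x, y, z⟩ := ω
  obtain ⟨-, hc, hd⟩ : (pUX u x ≠ 0 ∧ pS s ≠ 0) ∧ Wy x s y ≠ 0 ∧ Wq y z ≠ 0 := by
    simpa only [degJoint, degW, mul_ne_zero_iff] using h0
  dsimp only
  rw [marginal_degJoint_SXY_eq_mul hWq hWy, marginal_degJoint_US_eq_mul hpUX hpS hWy hWq,
    marginal_degJoint_USXY_eq_mul hWq hWy, marginal_degJoint_ZUSY_eq_mul hWq,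
    marginal_degJoint_ZSY_eq_mul hWq,
    marginal_swap (P := 𝐏) (fun ω => ω.2.2.2.2) (fun ω => ω.1) z u]
  exact mulLogb_density_chain _ (marginal_pos hP hω _).ne' (marginal_pos hP hω _).ne'
    (marginal_pos hP hω _).ne' (marginal_pos hP hω _).ne' (marginal_pos hP hω _).ne'
    (marginal_pos hP hω _).ne' (marginal_pos hP hω _).ne' (marginal_pos hP hω _).ne' hc hd

end Degraded

/-- **Degraded-channel sum-rate inequality.**
If `S ~ P_S` is independent of `(U, X)`, `Y` is generated from `(X, S)` via `P_{Y|XS}`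
and `Z` from `Y` via `P_{Z|Y}` (so `U − (X,S) − Y − Z` is a Markov chain), then
`I(U;Z) + I(X;Y|U,S) ≤ I(X;Y|S)`. -/
theorem degraded_sum_rate_inequality
    {U 𝓧 𝓢 𝓨 𝓩 : Type*} [Fintype U] [Fintype 𝓧] [Fintype 𝓢] [Fintype 𝓨] [Fintype 𝓩]
    (pUX : U → 𝓧 → ℝ) (hpUX : IsPMF2 pUX)
    (pS : 𝓢 → ℝ) (hpS : IsPMF pS)
    (Wy : 𝓧 → 𝓢 → 𝓨 → ℝ) (hWy : IsChan2 Wy)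
    (Wq : 𝓨 → 𝓩 → ℝ) (hWq : IsChan1 Wq) :
    rateIUZ pUX pS (degW Wy Wq) + rateIXY_US pUX pS (degW Wy Wq) ≤
      rateIXY_S (fun x => ∑ u, pUX u x) pS (degW Wy Wq) := by
  classical
  rw [degraded_chain_rule hpUX hpS hWy hWq]
  exact le_add_of_nonneg_right
    (CMI_nonneg _ fun _ _ _ => marginal_nonneg (degJoint_nonneg hpUX hpS hWy hWq) _ _)

end
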